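/- arXiv:1710.00534 — 9 statements merged into one kernel-verified Lean document; each statement's English description precedes it below -/
import Mathlib

section
/- Let U_i : H → H be ρ_i-strongly quasi-nonexpansive (ρ_i ≥ 0), i = 1,…,m, with a common fixed point, let ω_i ≥ 0 sum to 1, and let U := Σ ω_i U_i. Then for any x ∈ H and any z in the intersection of the Fix U_i, ‖Ux − z‖² ≤ ‖x − z‖² − Σ_{i=1}^m ω_i ρ_i ‖U_i x − x‖². -/
theorem convex_combination_sqne_ineq
    {H : Type*} [NormedAddCommGroup H] [InnerProductSpace ℝ H]
    (m : ℕ) (U : Fin m → H → H) (ρ : Fin m → ℝ) (ω : Fin m → ℝ)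
    (hρ : ∀ i, 0 ≤ ρ i)
    (hsqne : ∀ i, ∀ x : H, ∀ z ∈ {y : H | U i y = y},
      ‖U i x - z‖ ^ 2 ≤ ‖x - z‖ ^ 2 - ρ i * ‖U i x - x‖ ^ 2)
    (hcommon : (⋂ i, {y : H | U i y = y}).Nonempty)
    (hω : ∀ i, 0 ≤ ω i) (hωsum : ∑ i, ω i = 1)
    (Uc : H → H) (hUc : ∀ x : H, Uc x = ∑ i, ω i • U i x) :
    ∀ x : H, ∀ z ∈ ⋂ i, {y : H | U i y = y},
      ‖Uc x - z‖ ^ 2 ≤ ‖x - z‖ ^ 2 - ∑ i, ω i * ρ i * ‖U i x - x‖ ^ 2 := by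
  intro x z hz
  simp only [Set.mem_iInter, Set.mem_setOf_eq] at hz
  have hdiff : Uc x - z = ∑ i, ω i • (U i x - z) := by
    rw [hUc]
    simp only [smul_sub, Finset.sum_sub_distrib, ← Finset.sum_smul, hωsum, one_smul]
  have h1 : ‖Uc x - z‖ ≤ ∑ i, ω i * ‖U i x - z‖ := by
    rw [hdiff]
    refine (norm_sum_le _ _).trans (le_of_eq ?_)
    refine Finset.sum_congr rfl fun i _ => ?_
    rw [norm_smul, Real.norm_eq_abs, abs_of_nonneg (hω i)]
  have h2 : ‖Uc x - z‖ ^ 2 ≤ ∑ i, ω i * ‖U i x - z‖ ^ 2 := by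
    calc ‖Uc x - z‖ ^ 2 ≤ (∑ i, ω i * ‖U i x - z‖) ^ 2 := by
          apply pow_le_pow_left₀ (norm_nonneg _) h1
      _ ≤ (∑ i, ω i) * ∑ i, ω i * ‖U i x - z‖ ^ 2 := by
          apply Finset.sum_sq_le_sum_mul_sum_of_sq_eq_mul
          · exact fun i _ => hω i
          · exact fun i _ => mul_nonneg (hω i) (sq_nonneg _)
          · intro i _; ring
      _ = ∑ i, ω i * ‖U i x - z‖ ^ 2 := by rw [hωsum, one_mul]
  calc ‖Uc x - z‖ ^ 2 ≤ ∑ i, ω i * ‖U i x - z‖ ^ 2 := h2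
    _ ≤ ∑ i, ω i * (‖x - z‖ ^ 2 - ρ i * ‖U i x - x‖ ^ 2) := by
        apply Finset.sum_le_sum
        intro i _
        exact mul_le_mul_of_nonneg_left (hsqne i x z (hz i)) (hω i)
    _ = ‖x - z‖ ^ 2 - ∑ i, ω i * ρ i * ‖U i x - x‖ ^ 2 := by
        simp only [mul_sub, Finset.sum_sub_distrib, ← Finset.sum_mul, hωsum, one_mul, mul_assoc]
end

section
/- Let U_i : H → H be ρ_i-strongly quasi-nonexpansive (ρ_i ≥ 0), i = 1,…,m, with a common fixed point, let ω_i ≥ 0 sum to 1, and let U := Σ ω_i U_i. Then for any z ∈ ⋂_i Fix U_i, any x ∈ H, and any R > 0 with R ≥ ‖x − z‖, we have (1/(2R)) Σ_{i=1}^m ω_i ρ_i ‖U_i x − x‖² ≤ ‖Ux − x‖. -/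
/-!
Expanding the squared norm, each strong quasi-nonexpansiveness inequality at `z` gives
`ρᵢ‖Uᵢx - x‖² ≤ 2⟪Uᵢx - x, z - x⟫`. Averaging with the weights `ωᵢ` turns the right side into
`2⟪Ux - x, z - x⟫`, which Cauchy–Schwarz bounds by `2R‖Ux - x‖`.
-/

open Finset RealInnerProductSpace

lemma mul_sq_norm_sub_le_two_inner_of_sq_norm_le {H : Type*} [NormedAddCommGroup H]
    [InnerProductSpace ℝ H] {x y z : H} {ρ : ℝ}
    (h : ‖y - z‖ ^ 2 ≤ ‖x - z‖ ^ 2 - ρ * ‖y - x‖ ^ 2) :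
    ρ * ‖y - x‖ ^ 2 ≤ 2 * ⟪y - x, z - x⟫ := by
  have hexpand : ‖y - z‖ ^ 2 = ‖y - x‖ ^ 2 - 2 * ⟪y - x, z - x⟫ + ‖x - z‖ ^ 2 := by
    rw [← sub_add_sub_cancel y x z, norm_add_sq_real, ← neg_sub z x, inner_neg_right]
    ring
  nlinarith [sq_nonneg ‖y - x‖]

lemma sum_smul_sub_of_sum_eq_one {H ι : Type*} [AddCommGroup H] [Module ℝ H] {s : Finset ι}
    {ω : ι → ℝ} (hω : ∑ i ∈ s, ω i = 1) (v : ι → H) (x : H) :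
    ∑ i ∈ s, ω i • v i - x = ∑ i ∈ s, ω i • (v i - x) := by
  simp only [smul_sub, sum_sub_distrib, ← sum_smul, hω, one_smul]

lemma weighted_sum_le_two_inner_sum_smul {H ι : Type*} [NormedAddCommGroup H]
    [InnerProductSpace ℝ H] {s : Finset ι} {ω a : ι → ℝ} {d : ι → H} {w : H}
    (hω : ∀ i ∈ s, 0 ≤ ω i) (ha : ∀ i ∈ s, a i ≤ 2 * ⟪d i, w⟫) :
    ∑ i ∈ s, ω i * a i ≤ 2 * ⟪∑ i ∈ s, ω i • d i, w⟫ := by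
  rw [sum_inner, mul_sum]
  refine sum_le_sum fun i hi => ?_
  rw [real_inner_smul_left, mul_left_comm]
  exact mul_le_mul_of_nonneg_left (ha i hi) (hω i hi)

theorem convex_combination_sqne_residual_bound_general
    {H : Type*} [NormedAddCommGroup H] [InnerProductSpace ℝ H]
    (m : ℕ) (U : Fin m → H → H) (ρ : Fin m → ℝ) (ω : Fin m → ℝ)
    (hsqne : ∀ i, ∀ x : H, ∀ z ∈ {y : H | U i y = y},
      ‖U i x - z‖ ^ 2 ≤ ‖x - z‖ ^ 2 - ρ i * ‖U i x - x‖ ^ 2)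
    (hω : ∀ i, 0 ≤ ω i) (hωsum : ∑ i, ω i = 1)
    (Uc : H → H) (hUc : ∀ x : H, Uc x = ∑ i, ω i • U i x) :
    ∀ z ∈ ⋂ i, {y : H | U i y = y}, ∀ x : H, ∀ R : ℝ, 0 < R → ‖x - z‖ ≤ R →
      (1 / (2 * R)) * ∑ i, ω i * ρ i * ‖U i x - x‖ ^ 2 ≤ ‖Uc x - x‖ := by
  intro z hz x R hR hxz
  have hsum : ∑ i, ω i * (ρ i * ‖U i x - x‖ ^ 2) ≤ 2 * ⟪Uc x - x, z - x⟫ := by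
    rw [hUc, sum_smul_sub_of_sum_eq_one hωsum]
    exact weighted_sum_le_two_inner_sum_smul (fun i _ => hω i) fun i _ =>
      mul_sq_norm_sub_le_two_inner_of_sq_norm_le (hsqne i x z (Set.mem_iInter.mp hz i))
  have hcs : ⟪Uc x - x, z - x⟫ ≤ ‖Uc x - x‖ * R :=
    (real_inner_le_norm _ _).trans <|
      mul_le_mul_of_nonneg_left (by rwa [norm_sub_rev]) (norm_nonneg _)
  simp only [mul_assoc] at hsum ⊢
  rw [one_div, inv_mul_le_iff₀ (by positivity)]
  linarith

theorem convex_combination_sqne_residual_bound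
    {H : Type*} [NormedAddCommGroup H] [InnerProductSpace ℝ H]
    (m : ℕ) (U : Fin m → H → H) (ρ : Fin m → ℝ) (ω : Fin m → ℝ)
    (hρ : ∀ i, 0 ≤ ρ i)
    (hsqne : ∀ i, ∀ x : H, ∀ z ∈ {y : H | U i y = y},
      ‖U i x - z‖ ^ 2 ≤ ‖x - z‖ ^ 2 - ρ i * ‖U i x - x‖ ^ 2)
    (hcommon : (⋂ i, {y : H | U i y = y}).Nonempty)
    (hω : ∀ i, 0 ≤ ω i) (hωsum : ∑ i, ω i = 1)
    (Uc : H → H) (hUc : ∀ x : H, Uc x = ∑ i, ω i • U i x) :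
    ∀ z ∈ ⋂ i, {y : H | U i y = y}, ∀ x : H, ∀ R : ℝ, 0 < R → ‖x - z‖ ≤ R →
      (1 / (2 * R)) * ∑ i, ω i * ρ i * ‖U i x - x‖ ^ 2 ≤ ‖Uc x - x‖ :=
  convex_combination_sqne_residual_bound_general m U ρ ω hsqne hω hωsum Uc hUc
end

section
/- Let U_i : H → H be ρ_i-strongly quasi-nonexpansive (ρ_i ≥ 0), i = 1,…,m, with a common fixed point, and let U := U_m U_{m−1} ⋯ U_1. Then for any x ∈ H and z ∈ ⋂_i Fix U_i, ‖Ux − z‖² ≤ ‖x − z‖² − Σ_{i=1}^m ρ_i ‖Q_i x − Q_{i−1} x‖², where Q_i := U_i U_{i−1} ⋯ U_1 and Q_0 := Id. -/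
theorem composition_sqne_ineq
    {H : Type*} [NormedAddCommGroup H] [InnerProductSpace ℝ H]
    (m : ℕ) (U : Fin m → H → H) (ρ : Fin m → ℝ)
    (hρ : ∀ i, 0 ≤ ρ i)
    (hsqne : ∀ i, ∀ x : H, ∀ z ∈ {y : H | U i y = y},
      ‖U i x - z‖ ^ 2 ≤ ‖x - z‖ ^ 2 - ρ i * ‖U i x - x‖ ^ 2)
    (hcommon : (⋂ i, {y : H | U i y = y}).Nonempty)
    (Q : ℕ → H → H) (hQ0 : Q 0 = id)
    (hQ : ∀ i : Fin m, Q (i + 1) = U i ∘ Q i) :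
    ∀ x : H, ∀ z ∈ ⋂ i, {y : H | U i y = y},
      ‖Q m x - z‖ ^ 2 ≤ ‖x - z‖ ^ 2
        - ∑ i : Fin m, ρ i * ‖Q (i + 1) x - Q i x‖ ^ 2 := by
  intro x z hz
  simp only [Set.mem_iInter, Set.mem_setOf_eq] at hz
  set g : ℕ → ℝ := fun i =>
    if h : i < m then ρ ⟨i, h⟩ * ‖Q (i + 1) x - Q i x‖ ^ 2 else 0 with hg
  have key : ∀ n : ℕ, n ≤ m →
      ‖Q n x - z‖ ^ 2 + ∑ i ∈ Finset.range n, g i ≤ ‖x - z‖ ^ 2 := by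
    intro n
    induction n with
    | zero => intro _; simp [hQ0]
    | succ k ih =>
      intro hk
      have hk' : k < m := by omega
      have ihk := ih (by omega)
      have hstep := hsqne ⟨k, hk'⟩ (Q k x) z (hz ⟨k, hk'⟩)
      have hQk : Q (k + 1) x = U ⟨k, hk'⟩ (Q k x) := by
        have := congrFun (hQ ⟨k, hk'⟩) x
        simpa using this
      rw [Finset.sum_range_succ]
      have hgk : g k = ρ ⟨k, hk'⟩ * ‖Q (k + 1) x - Q k x‖ ^ 2 := by
        simp [hg, hk']
      rw [hgk, hQk]
      nlinarith [hstep, ihk]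
  have hm := key m le_rfl
  have hsum : ∑ i : Fin m, ρ i * ‖Q (i + 1) x - Q i x‖ ^ 2
      = ∑ i ∈ Finset.range m, g i := by
    rw [Finset.sum_range fun i => g i]
    apply Finset.sum_congr rfl
    intro i _
    simp [hg, i.isLt]
  rw [hsum]
  linarith
end

section
/- Let U_i : H → H be ρ_i-strongly quasi-nonexpansive with ρ := min_i ρ_i > 0, i = 1,…,m, with a common fixed point, and let U := U_m U_{m−1} ⋯ U_1. Then Fix U = ⋂_{i=1}^m Fix U_i and U is ρ/m-strongly quasi-nonexpansive. -/
theorem composition_sqne_fix_and_modulus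
    {H : Type*} [NormedAddCommGroup H] [InnerProductSpace ℝ H]
    (m : ℕ) (hm : 0 < m) (U : Fin m → H → H) (ρ : Fin m → ℝ)
    (ρmin : ℝ) (hmin : IsLeast (Set.range ρ) ρmin) (hρpos : 0 < ρmin)
    (hsqne : ∀ i, ∀ x : H, ∀ z ∈ {y : H | U i y = y},
      ‖U i x - z‖ ^ 2 ≤ ‖x - z‖ ^ 2 - ρ i * ‖U i x - x‖ ^ 2)
    (hcommon : (⋂ i, {y : H | U i y = y}).Nonempty)
    (Q : ℕ → H → H) (hQ0 : Q 0 = id)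
    (hQ : ∀ i : Fin m, Q (i + 1) = U i ∘ Q i) :
    {x : H | Q m x = x} = ⋂ i, {y : H | U i y = y} ∧
    ∀ x : H, ∀ z ∈ {y : H | Q m y = y},
      ‖Q m x - z‖ ^ 2 ≤ ‖x - z‖ ^ 2 - (ρmin / m) * ‖Q m x - x‖ ^ 2 := by
  -- common fixed points are fixed by every Q k, k ≤ m
  have hfixQ : ∀ z : H, (∀ i, U i z = z) → ∀ k, k ≤ m → Q k z = z := by
    intro z hz k
    induction k with
    | zero => intro _; rw [hQ0]; rfl
    | succ n ih =>
      intro h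
      have hn : n < m := h
      rw [hQ ⟨n, hn⟩]
      simp only [Function.comp_apply]
      rw [ih hn.le, hz ⟨n, hn⟩]
  -- key telescoping inequality
  have key : ∀ k, k ≤ m → ∀ x z : H, (∀ i, U i z = z) →
      ‖Q k x - z‖ ^ 2 + ρmin * ∑ i ∈ Finset.range k, ‖Q (i + 1) x - Q i x‖ ^ 2
        ≤ ‖x - z‖ ^ 2 := by
    intro k
    induction k with
    | zero => intro _ x z _; simp [hQ0]
    | succ n ih =>
      intro h x z hz
      have hn : n < m := h
      have hQn : Q (n + 1) x = U ⟨n, hn⟩ (Q n x) := by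
        rw [hQ ⟨n, hn⟩]; rfl
      have h1 := hsqne ⟨n, hn⟩ (Q n x) z (hz ⟨n, hn⟩)
      have h2 := ih hn.le x z hz
      have h3 : ρmin ≤ ρ ⟨n, hn⟩ := hmin.2 (Set.mem_range_self _)
      have h4 : (0:ℝ) ≤ ‖U ⟨n, hn⟩ (Q n x) - Q n x‖ ^ 2 := sq_nonneg _
      rw [Finset.sum_range_succ, hQn]
      nlinarith [mul_le_mul_of_nonneg_right h3 h4]
  -- part 1: fixed point set equality
  have hset : {x : H | Q m x = x} = ⋂ i, {y : H | U i y = y} := by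
    ext x
    simp only [Set.mem_setOf_eq, Set.mem_iInter]
    constructor
    · intro hx
      obtain ⟨z, hz⟩ := hcommon
      have hz' : ∀ i, U i z = z := fun i => Set.mem_iInter.mp hz i
      have hk := key m le_rfl x z hz'
      rw [hx] at hk
      have hnn : (0:ℝ) ≤ ∑ i ∈ Finset.range m, ‖Q (i + 1) x - Q i x‖ ^ 2 :=
        Finset.sum_nonneg fun j _ => sq_nonneg _
      have heq : ∑ i ∈ Finset.range m, ‖Q (i + 1) x - Q i x‖ ^ 2 = 0 := by
        nlinarith
      have hS0 : ∀ i ∈ Finset.range m, ‖Q (i + 1) x - Q i x‖ ^ 2 = 0 :=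
        (Finset.sum_eq_zero_iff_of_nonneg (fun j _ => sq_nonneg _)).mp heq
      have hQx : ∀ k, k ≤ m → Q k x = x := by
        intro k
        induction k with
        | zero => intro _; rw [hQ0]; rfl
        | succ n ih =>
          intro h
          have hn : n < m := h
          have h0 := hS0 n (Finset.mem_range.mpr hn)
          have hstep : Q (n + 1) x = Q n x :=
            sub_eq_zero.mp (norm_eq_zero.mp
              ((pow_eq_zero_iff (two_ne_zero)).mp h0))
          rw [hstep, ih hn.le]
      intro i
      have h1 : Q (↑i + 1) x = U i (Q ↑i x) := by rw [hQ i]; rfl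
      have h2 : Q ↑i x = x := hQx i (i.2.le)
      have h3 : Q (↑i + 1) x = x := hQx (↑i + 1) i.2
      rw [h2] at h1
      rw [← h1, h3]
    · intro hx
      exact hfixQ x hx m le_rfl
  refine ⟨hset, ?_⟩
  intro x z hz
  have hz' : ∀ i, U i z = z := by
    have : z ∈ ⋂ i, {y : H | U i y = y} := hset ▸ hz
    exact fun i => Set.mem_iInter.mp this i
  have hk := key m le_rfl x z hz'
  set S := ∑ i ∈ Finset.range m, ‖Q (i + 1) x - Q i x‖ ^ 2 with hS
  have htel : Q m x - x = ∑ i ∈ Finset.range m, (Q (i + 1) x - Q i x) := by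
    rw [Finset.sum_range_sub (f := fun i => Q i x), hQ0]; rfl
  have hnorm : ‖Q m x - x‖ ≤ ∑ i ∈ Finset.range m, ‖Q (i + 1) x - Q i x‖ := by
    rw [htel]; exact norm_sum_le _ _
  have hcs : (∑ i ∈ Finset.range m, ‖Q (i + 1) x - Q i x‖) ^ 2 ≤ (m : ℝ) * S := by
    have := sq_sum_le_card_mul_sum_sq (s := Finset.range m)
      (f := fun i => ‖Q (i + 1) x - Q i x‖)
    simpa using this
  have hsq : ‖Q m x - x‖ ^ 2 ≤ (m : ℝ) * S := by
    have h0 : (0:ℝ) ≤ ‖Q m x - x‖ := norm_nonneg _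
    nlinarith
  have hmpos : (0:ℝ) < m := by exact_mod_cast hm
  have : (ρmin / m) * ‖Q m x - x‖ ^ 2 ≤ ρmin * S := by
    rw [div_mul_eq_mul_div, div_le_iff₀ hmpos]
    calc ρmin * ‖Q m x - x‖ ^ 2 ≤ ρmin * ((m : ℝ) * S) :=
          mul_le_mul_of_nonneg_left hsq hρpos.le
      _ = ρmin * S * m := by ring
  linarith
end

section
/- Let (x^k) ⊆ H be Fejér monotone with respect to a nonempty set C ⊆ H, let s be a positive integer, and suppose the subsequence (x^{ks})_k converges weakly to some z ∈ C and ‖x^{k+1} − x^k‖ → 0. Then the whole sequence (x^k) converges weakly to z. -/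
/-!
Every index `n` lies fewer than `s` steps after `⌊n/s⌋ s`, so `‖x n - x (⌊n/s⌋ s)‖` is bounded by a
sum of `s` consecutive step lengths and tends to `0`; a perturbation tending to `0` in norm does
not change weak limits.
-/

open Filter Finset Topology

section BoundedLag

variable {α : Type*} [PseudoMetricSpace α] {f : ℕ → α}

theorem tendsto_sum_Ico_dist_succ (hf : Tendsto (fun n => dist (f n) (f (n + 1))) atTop (𝓝 0))
    (s : ℕ) : Tendsto (fun m => ∑ i ∈ Ico m (m + s), dist (f i) (f (i + 1))) atTop (𝓝 0) := by
  simp_rw [sum_Ico_eq_sum_range, add_tsub_cancel_left]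
  simpa using tendsto_finsetSum (range s) fun i _ => hf.comp (tendsto_add_atTop_nat i)

theorem tendsto_dist_of_lag_lt (hf : Tendsto (fun n => dist (f n) (f (n + 1))) atTop (𝓝 0))
    {g : ℕ → ℕ} {s : ℕ} (hg_le : ∀ n, g n ≤ n) (hg_lt : ∀ n, n < g n + s) :
    Tendsto (fun n => dist (f n) (f (g n))) atTop (𝓝 0) := by
  have hg_top : Tendsto g atTop atTop :=
    tendsto_atTop_mono' atTop (Eventually.of_forall fun n => by have := hg_lt n; omega)
      (tendsto_sub_atTop_nat s)
  refine squeeze_zero (fun _ => dist_nonneg) (fun n => ?_)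
    ((tendsto_sum_Ico_dist_succ hf s).comp hg_top)
  calc dist (f n) (f (g n)) = dist (f (g n)) (f n) := dist_comm _ _
    _ ≤ ∑ i ∈ Ico (g n) n, dist (f i) (f (i + 1)) := dist_le_Ico_sum_dist f (hg_le n)
    _ ≤ ∑ i ∈ Ico (g n) (g n + s), dist (f i) (f (i + 1)) :=
      sum_le_sum_of_subset_of_nonneg (Ico_subset_Ico_right (hg_lt n).le)
        fun _ _ _ => dist_nonneg

end BoundedLag

theorem tendsto_inner_of_tendsto_norm_sub {𝕜 E ι : Type*} [RCLike 𝕜] [SeminormedAddCommGroup E]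
    [InnerProductSpace 𝕜 E] {l : Filter ι} {u v : ι → E} {y : E} {c : 𝕜}
    (hu : Tendsto (fun n => inner 𝕜 y (u n)) l (𝓝 c))
    (huv : Tendsto (fun n => ‖v n - u n‖) l (𝓝 0)) :
    Tendsto (fun n => inner 𝕜 y (v n)) l (𝓝 c) := by
  have hsmall : Tendsto (fun n => inner 𝕜 y (v n - u n)) l (𝓝 0) :=
    squeeze_zero_norm (fun n => norm_inner_le_norm y _) (by simpa using huv.const_mul ‖y‖)
  simpa [inner_sub_right] using hu.add hsmall

theorem fejer_subseq_weak_convergence_general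
    {H : Type*} [NormedAddCommGroup H] [InnerProductSpace ℝ H]
    (x : ℕ → H)
    (s : ℕ) (hs : 0 < s)
    (z : H)
    (hweak : ∀ y : H, Filter.Tendsto (fun k => (inner ℝ y (x (k * s)) : ℝ))
      Filter.atTop (nhds (inner ℝ y z)))
    (hdiff : Filter.Tendsto (fun k => ‖x (k + 1) - x k‖) Filter.atTop (nhds 0)) :
    ∀ y : H, Filter.Tendsto (fun k => (inner ℝ y (x k) : ℝ))
      Filter.atTop (nhds (inner ℝ y z)) := by
  intro y
  have hsucc : Tendsto (fun k => dist (x k) (x (k + 1))) atTop (𝓝 0) :=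
    hdiff.congr fun k => by rw [dist_comm, dist_eq_norm]
  have hlag : Tendsto (fun n => ‖x n - x (n / s * s)‖) atTop (𝓝 0) := by
    simpa only [dist_eq_norm] using tendsto_dist_of_lag_lt hsucc (g := fun n => n / s * s)
      (fun n => Nat.div_mul_le_self n s) (fun n => Nat.lt_div_mul_add hs)
  exact tendsto_inner_of_tendsto_norm_sub
    ((hweak y).comp (Nat.tendsto_div_const_atTop hs.ne')) hlag

theorem fejer_subseq_weak_convergence
    {H : Type*} [NormedAddCommGroup H] [InnerProductSpace ℝ H]
    (x : ℕ → H) (C : Set H) (hCne : C.Nonempty)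
    (s : ℕ) (hs : 0 < s)
    (hFejer : ∀ z ∈ C, ∀ k : ℕ, ‖x (k + 1) - z‖ ≤ ‖x k - z‖)
    (z : H) (hz : z ∈ C)
    (hweak : ∀ y : H, Filter.Tendsto (fun k => (inner ℝ y (x (k * s)) : ℝ))
      Filter.atTop (nhds (inner ℝ y z)))
    (hdiff : Filter.Tendsto (fun k => ‖x (k + 1) - x k‖) Filter.atTop (nhds 0)) :
    ∀ y : H, Filter.Tendsto (fun k => (inner ℝ y (x k) : ℝ))
      Filter.atTop (nhds (inner ℝ y z)) :=
  fejer_subseq_weak_convergence_general x s hs z hweak hdiff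
end

section
/- Let f : ℝⁿ → ℝ be convex, Lipschitz on bounded sets, with S(f,0) := {x : f(x) ≤ 0} nonempty, and suppose the Slater condition holds: f(z) < 0 for some z. Then the subgradient projection P_f is boundedly linearly regular: for every bounded set K ⊆ ℝⁿ there is γ > 0 such that d(x, S(f,0)) ≤ γ ‖x − P_f x‖ for all x ∈ K. -/
/-!
If `f x > 0`, convexity puts the point of the segment `[x, z]` towards a Slater point `z` where
the affine interpolation of `f` vanishes into `S(f,0)`, so `d(x, S(f,0)) ≤ f x ‖x - z‖ / (-f z)`:
the residual `f x` controls the distance linearly on bounded sets. On the other hand the step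
of the subgradient projection has length `f x / ‖g x‖`, and the local Lipschitz bound caps
`‖g x‖` on bounded sets, so the step is at least a fixed multiple of `f x`.
-/

open Metric Set
open scoped NNReal RealInnerProductSpace

section NormedSpace

variable {E : Type*} [NormedAddCommGroup E] [NormedSpace ℝ E]

theorem norm_div_norm_sq_smul_self (a : ℝ) (v : E) : ‖(a / ‖v‖ ^ 2) • v‖ = |a| / ‖v‖ := by
  rcases eq_or_ne v 0 with rfl | hv
  · simp
  have hv' : 0 < ‖v‖ := norm_pos_iff.mpr hv
  rw [norm_smul, Real.norm_eq_abs, abs_div, abs_of_pos (pow_pos hv' 2)]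
  field_simp

theorem infDist_sublevel_le_of_convexOn {f : E → ℝ} (hf : ConvexOn ℝ univ f) {x z : E}
    (hz : f z < 0) (hx : 0 < f x) :
    infDist x {y | f y ≤ 0} ≤ f x / -f z * ‖x - z‖ := by
  have hden : 0 < f x - f z := by linarith
  set t := f x / (f x - f z)
  have ht0 : 0 ≤ t := by positivity
  have ht1 : 0 ≤ 1 - t := by rw [sub_nonneg, div_le_one hden]; linarith
  have hw : f ((1 - t) • x + t • z) ≤ 0 := calc
    f ((1 - t) • x + t • z) ≤ (1 - t) * f x + t * f z :=
      hf.2 (mem_univ x) (mem_univ z) ht1 ht0 (by ring)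
    _ = 0 := by simp only [t]; field_simp; ring
  calc infDist x {y | f y ≤ 0} ≤ dist x ((1 - t) • x + t • z) := infDist_le_dist_of_mem hw
    _ = t * ‖x - z‖ := by
      rw [dist_eq_norm, show x - ((1 - t) • x + t • z) = t • (x - z) by module, norm_smul,
        Real.norm_of_nonneg ht0]
    _ ≤ f x / -f z * ‖x - z‖ := by
      gcongr
      exact div_le_div_of_nonneg_left hx.le (neg_pos.mpr hz) (by linarith)

end NormedSpace

section InnerProductSpace

variable {E : Type*} [NormedAddCommGroup E] [InnerProductSpace ℝ E]

theorem ne_zero_of_subgradient_of_lt {f : E → ℝ} {g x z : E}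
    (hg : ⟪g, z - x⟫ ≤ f z - f x) (hzx : f z < f x) : g ≠ 0 := by
  rintro rfl
  rw [inner_zero_left] at hg
  linarith

theorem norm_le_of_subgradient_of_lipschitzOnWith {f : E → ℝ} {g x : E} {L : ℝ≥0}
    (hg : ∀ y, ⟪g, y - x⟫ ≤ f y - f x) (hL : LipschitzOnWith L f (closedBall x 1)) :
    ‖g‖ ≤ L := by
  rcases eq_or_ne g 0 with rfl | hg0
  · simp
  set y := x + ‖g‖⁻¹ • g
  have hyx : dist y x = 1 := by
    rw [dist_eq_norm, add_sub_cancel_left, norm_smul, norm_inv, norm_norm,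
      inv_mul_cancel₀ (norm_ne_zero_iff.mpr hg0)]
  calc ‖g‖ = ⟪g, y - x⟫ := by
        rw [add_sub_cancel_left, real_inner_smul_right, real_inner_self_eq_norm_sq]
        field_simp
    _ ≤ f y - f x := hg y
    _ ≤ dist (f y) (f x) := (le_abs_self _).trans (Real.dist_eq _ _).ge
    _ ≤ L * dist y x :=
      hL.dist_le_mul y (mem_closedBall.mpr hyx.le) x (mem_closedBall_self zero_le_one)
    _ = L := by rw [hyx, mul_one]

end InnerProductSpace

theorem subgradient_projection_boundedly_linearly_regular
    (n : ℕ) (f : EuclideanSpace ℝ (Fin n) → ℝ)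
    (hconv : ConvexOn ℝ Set.univ f)
    (hLip : ∀ S : Set (EuclideanSpace ℝ (Fin n)), Bornology.IsBounded S →
      ∃ L : NNReal, LipschitzOnWith L f S)
    (g : EuclideanSpace ℝ (Fin n) → EuclideanSpace ℝ (Fin n))
    (hg : ∀ x y : EuclideanSpace ℝ (Fin n), (inner ℝ (g x) (y - x) : ℝ) ≤ f y - f x)
    (hSlater : ∃ z, f z < 0)
    (Pf : EuclideanSpace ℝ (Fin n) → EuclideanSpace ℝ (Fin n))
    (hPf : ∀ x, Pf x = if 0 < f x then x - (f x / ‖g x‖ ^ 2) • g x else x) :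
    ∀ K : Set (EuclideanSpace ℝ (Fin n)), Bornology.IsBounded K →
      ∃ γ > 0, ∀ x ∈ K, Metric.infDist x {y | f y ≤ 0} ≤ γ * ‖x - Pf x‖ := by
  intro K hK
  obtain ⟨z, hz⟩ := hSlater
  have hc : 0 < -f z := neg_pos.mpr hz
  obtain ⟨R, hR, hKR⟩ := hK.subset_closedBall_lt 0 0
  obtain ⟨L, hL⟩ := hLip (closedBall 0 (R + 1)) isBounded_closedBall
  refine ⟨(R + ‖z‖) * (L + 1) / -f z, by positivity, fun x hx => ?_⟩
  have hxR : ‖x‖ ≤ R := mem_closedBall_zero_iff.mp (hKR hx)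
  by_cases hfx : 0 < f x
  swap
  · rw [infDist_zero_of_mem (s := {y | f y ≤ 0}) (not_lt.mp hfx)]
    positivity
  have hgL : ‖g x‖ ≤ L := norm_le_of_subgradient_of_lipschitzOnWith (hg x) <|
    hL.mono <| closedBall_subset_closedBall' <| by rw [dist_zero_right]; linarith
  have hg0 : 0 < ‖g x‖ :=
    norm_pos_iff.mpr (ne_zero_of_subgradient_of_lt (hg x z) (hz.trans hfx))
  have hstep : ‖x - Pf x‖ = f x / ‖g x‖ := by
    rw [hPf, if_pos hfx, sub_sub_cancel, norm_div_norm_sq_smul_self, abs_of_pos hfx]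
  calc infDist x {y | f y ≤ 0} ≤ f x / -f z * ‖x - z‖ :=
        infDist_sublevel_le_of_convexOn hconv hz hfx
    _ ≤ f x / -f z * (R + ‖z‖) := by
      gcongr
      exact (norm_sub_le x z).trans (by linarith)
    _ = (R + ‖z‖) * (L + 1) / -f z * (f x / (L + 1)) := by field_simp
    _ ≤ (R + ‖z‖) * (L + 1) / -f z * ‖x - Pf x‖ := by
      rw [hstep]
      gcongr
      linarith
end

section
/- In H = ℝⁿ, let C ⊆ ℝⁿ be nonempty, closed and convex, S ⊆ ℝⁿ nonempty and bounded, and U_k : ℝⁿ → ℝⁿ quasi-nonexpansive for each k. If the sequence (U_k) is weakly C-regular over S (every weak cluster point of any sequence (x^k) ⊆ S with ‖U_k x^k − x^k‖ → 0 lies in C), then (U_k) is C-regular over S: for any (x^k) ⊆ S, ‖U_k x^k − x^k‖ → 0 implies d(x^k, C) → 0. -/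
theorem weakly_regular_implies_regular_finite_dim
    (n : ℕ) (U : ℕ → EuclideanSpace ℝ (Fin n) → EuclideanSpace ℝ (Fin n))
    (S C : Set (EuclideanSpace ℝ (Fin n)))
    (hSne : S.Nonempty) (hSbdd : Bornology.IsBounded S)
    (hCne : C.Nonempty) (hCclosed : IsClosed C) (hCconv : Convex ℝ C)
    (hqne : ∀ k, {y | U k y = y}.Nonempty ∧
      ∀ x, ∀ z ∈ {y | U k y = y}, ‖U k x - z‖ ≤ ‖x - z‖)
    (hwreg : ∀ x : ℕ → EuclideanSpace ℝ (Fin n), (∀ k, x k ∈ S) →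
      Filter.Tendsto (fun k => ‖U k (x k) - x k‖) Filter.atTop (nhds 0) →
      ∀ (m : ℕ → ℕ), StrictMono m → ∀ y,
        Filter.Tendsto (fun k => x (m k)) Filter.atTop (nhds y) → y ∈ C) :
    ∀ x : ℕ → EuclideanSpace ℝ (Fin n), (∀ k, x k ∈ S) →
      Filter.Tendsto (fun k => ‖U k (x k) - x k‖) Filter.atTop (nhds 0) →
      Filter.Tendsto (fun k => Metric.infDist (x k) C) Filter.atTop (nhds 0) := by
  intro x hxS hres
  apply Filter.tendsto_of_subseq_tendsto
  intro ns hns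
  -- closure of S is compact (finite dim, bounded)
  have hcpt : IsCompact (closure S) := hSbdd.isCompact_closure
  have hmem : ∀ k, x (ns k) ∈ closure S := fun k => subset_closure (hxS (ns k))
  obtain ⟨y, _, φ, hφ, hconv⟩ := hcpt.tendsto_subseq hmem
  -- extract strictly monotone subsequence of ns ∘ φ
  obtain ⟨ψ, hψ, hψφ⟩ : ∃ ψ : ℕ → ℕ, StrictMono ψ ∧ StrictMono ((ns ∘ φ) ∘ ψ) :=
    Filter.strictMono_subseq_of_tendsto_atTop (hns.comp hφ.tendsto_atTop)
  have hconv' : Filter.Tendsto (fun k => x ((ns ∘ φ ∘ ψ) k)) Filter.atTop (nhds y) :=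
    hconv.comp hψ.tendsto_atTop
  have hyC : y ∈ C := hwreg x hxS hres (ns ∘ φ ∘ ψ) hψφ y hconv'
  refine ⟨φ ∘ ψ, ?_⟩
  have : Filter.Tendsto (fun k => Metric.infDist (x ((ns ∘ φ ∘ ψ) k)) C)
      Filter.atTop (nhds (Metric.infDist y C)) :=
    (Metric.continuous_infDist_pt C).continuousAt.tendsto.comp hconv'
  simpa [Function.comp, Metric.infDist_zero_of_mem hyC] using this
end

section
/- Let C ⊆ H be nonempty, closed and convex, and for each k let U_k : H → H be ρ_k-strongly quasi-nonexpansive with ρ := inf_k ρ_k > 0 and C ⊆ Fix U_k. Let x^0 ∈ H and x^{k+1} := U_k x^k. If the sequence (U_k) is boundedly linearly C-regular (for every bounded S there is δ > 0 with d(x,C) ≤ δ‖U_k x − x‖ for all x ∈ S and all k), then x^k converges strongly to some x* ∈ C, and there is q ∈ (0,1) such that ‖x^k − x*‖ ≤ 2 d(x^0, C) q^k for all k; one may take q = √(1 − ρ/δ²) with δ a modulus on a ball containing the sequence. -/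
lemma exists_proj_point {H : Type*} [NormedAddCommGroup H] [InnerProductSpace ℝ H]
    [CompleteSpace H] (C : Set H) (hCne : C.Nonempty) (hCclosed : IsClosed C)
    (hCconv : Convex ℝ C) (u : H) :
    ∃ z ∈ C, ‖u - z‖ = Metric.infDist u C := by
  obtain ⟨v, hv, hveq⟩ :=
    exists_norm_eq_iInf_of_complete_convex hCne hCclosed.isComplete hCconv u
  refine ⟨v, hv, ?_⟩
  rw [hveq, Metric.infDist_eq_iInf]
  simp [dist_eq_norm]

set_option maxHeartbeats 1000000 in
theorem boundedly_linearly_regular_linear_convergence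
    {H : Type*} [NormedAddCommGroup H] [InnerProductSpace ℝ H] [CompleteSpace H]
    (C : Set H) (hCne : C.Nonempty) (hCclosed : IsClosed C) (hCconv : Convex ℝ C)
    (U : ℕ → H → H) (ρk : ℕ → ℝ) (ρ : ℝ) (hρpos : 0 < ρ) (hρle : ∀ k, ρ ≤ ρk k)
    (hsqne : ∀ k, ∀ x : H, ∀ z ∈ {y : H | U k y = y},
      ‖U k x - z‖ ^ 2 ≤ ‖x - z‖ ^ 2 - ρk k * ‖U k x - x‖ ^ 2)
    (hCfix : ∀ k, C ⊆ {y : H | U k y = y})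
    (x : ℕ → H) (hx : ∀ k, x (k + 1) = U k (x k))
    (hlinreg : ∀ S : Set H, Bornology.IsBounded S →
      ∃ δ > 0, ∀ y ∈ S, ∀ k, Metric.infDist y C ≤ δ * ‖U k y - y‖) :
    ∃ xstar ∈ C, ∃ q ∈ Set.Ioo (0 : ℝ) 1,
      Filter.Tendsto x Filter.atTop (nhds xstar) ∧
      ∀ k, ‖x k - xstar‖ ≤ 2 * Metric.infDist (x 0) C * q ^ k := by
  -- basic step inequality
  have step : ∀ k, ∀ z ∈ C, ‖x (k+1) - z‖^2 ≤ ‖x k - z‖^2 - ρ * ‖x (k+1) - x k‖^2 := by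
    intro k z hz
    have h := hsqne k (x k) z (hCfix k hz)
    rw [hx k]
    nlinarith [sq_nonneg ‖U k (x k) - x k‖, hρle k]
  -- Fejér monotonicity
  have fej : ∀ k, ∀ z ∈ C, ‖x (k+1) - z‖ ≤ ‖x k - z‖ := by
    intro k z hz
    have h := step k z hz
    nlinarith [norm_nonneg (x (k+1) - z), norm_nonneg (x k - z), sq_nonneg ‖x (k+1) - x k‖,
      mul_nonneg hρpos.le (sq_nonneg ‖x (k+1) - x k‖)]
  have fejmono : ∀ z ∈ C, ∀ n m, n ≤ m → ‖x m - z‖ ≤ ‖x n - z‖ := by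
    intro z hz n m hnm
    induction m, hnm using Nat.le_induction with
    | base => exact le_rfl
    | succ m hnm ih => exact le_trans (fej m z hz) ih
  -- boundedness
  obtain ⟨z0, hz0⟩ := hCne
  set S : Set H := Metric.closedBall z0 ‖x 0 - z0‖ with hS
  have hxS : ∀ k, x k ∈ S := by
    intro k
    simp only [hS, Metric.mem_closedBall, dist_eq_norm]
    exact fejmono z0 hz0 0 k (Nat.zero_le k)
  obtain ⟨δ, hδpos, hδ⟩ := hlinreg S Metric.isBounded_closedBall
  set δ' : ℝ := δ + Real.sqrt ρ with hδ'def
  have hδ'pos : 0 < δ' := by positivity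
  have hρδ' : ρ < δ'^2 := by
    nlinarith [Real.sq_sqrt hρpos.le, Real.sqrt_nonneg ρ, hδpos]
  have hδ'bound : ∀ k, Metric.infDist (x k) C ≤ δ' * ‖x (k+1) - x k‖ := by
    intro k
    rw [hx k]
    calc Metric.infDist (x k) C ≤ δ * ‖U k (x k) - x k‖ := hδ (x k) (hxS k) k
      _ ≤ δ' * ‖U k (x k) - x k‖ := by
          apply mul_le_mul_of_nonneg_right _ (norm_nonneg _)
          nlinarith [Real.sqrt_nonneg ρ]
  set q : ℝ := Real.sqrt (1 - ρ / δ'^2) with hqdef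
  have h1sub : 0 < 1 - ρ / δ'^2 := by
    have : ρ / δ'^2 < 1 := (div_lt_one (by positivity)).mpr hρδ'
    linarith
  have hq0 : 0 < q := Real.sqrt_pos.mpr h1sub
  have hq2 : q^2 = 1 - ρ / δ'^2 := Real.sq_sqrt h1sub.le
  have hq1 : q < 1 := by
    have hρδ'2 : 0 < ρ / δ'^2 := by positivity
    nlinarith
  have hq2δ : δ'^2 * q^2 = δ'^2 - ρ := by
    rw [hq2]; field_simp
  -- contraction of infDist
  have key : ∀ k, Metric.infDist (x (k+1)) C ≤ q * Metric.infDist (x k) C := by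
    intro k
    obtain ⟨z, hz, hzeq⟩ := exists_proj_point C ⟨z0, hz0⟩ hCclosed hCconv (x k)
    have h1 : Metric.infDist (x (k+1)) C ≤ ‖x (k+1) - z‖ := by
      rw [← dist_eq_norm]; exact Metric.infDist_le_dist_of_mem hz
    have h2 := step k z hz
    have h3 := hδ'bound k
    rw [hzeq] at h2
    have hd0 : 0 ≤ Metric.infDist (x k) C := Metric.infDist_nonneg
    have hd10 : 0 ≤ Metric.infDist (x (k+1)) C := Metric.infDist_nonneg
    have h1sq : Metric.infDist (x (k+1)) C ^ 2 ≤ ‖x (k+1) - z‖^2 := by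
      nlinarith [norm_nonneg (x (k+1) - z)]
    have h3sq : Metric.infDist (x k) C ^ 2 ≤ δ'^2 * ‖x (k+1) - x k‖^2 := by
      nlinarith [norm_nonneg (x (k+1) - x k)]
    have A : δ'^2 * Metric.infDist (x (k+1)) C ^ 2 ≤
        δ'^2 * (Metric.infDist (x k) C ^ 2 - ρ * ‖x (k+1) - x k‖^2) :=
      mul_le_mul_of_nonneg_left (le_trans h1sq h2) (sq_nonneg δ')
    have B : ρ * Metric.infDist (x k) C ^ 2 ≤ ρ * (δ'^2 * ‖x (k+1) - x k‖^2) :=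
      mul_le_mul_of_nonneg_left h3sq hρpos.le
    have hmain : δ'^2 * Metric.infDist (x (k+1)) C ^ 2 ≤
        (δ'^2 - ρ) * Metric.infDist (x k) C ^ 2 := by nlinarith [A, B]
    have hsq : Metric.infDist (x (k+1)) C ^ 2 ≤ (q * Metric.infDist (x k) C)^2 := by
      have hr : δ'^2 * (q * Metric.infDist (x k) C)^2
          = (δ'^2 - ρ) * Metric.infDist (x k) C ^ 2 := by
        rw [show (q * Metric.infDist (x k) C)^2 = q^2 * Metric.infDist (x k) C ^2 from by ring,
          ← mul_assoc, hq2δ]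
      rw [← hr] at hmain
      exact le_of_mul_le_mul_left hmain (pow_pos hδ'pos 2)
    have hqd : 0 ≤ q * Metric.infDist (x k) C := mul_nonneg hq0.le hd0
    nlinarith [hsq, hd10, hqd]
  have hdecay : ∀ k, Metric.infDist (x k) C ≤ Metric.infDist (x 0) C * q ^ k := by
    intro k
    induction k with
    | zero => simp
    | succ k ih =>
        calc Metric.infDist (x (k+1)) C ≤ q * Metric.infDist (x k) C := key k
          _ ≤ q * (Metric.infDist (x 0) C * q ^ k) :=
              mul_le_mul_of_nonneg_left ih hq0.le
          _ = Metric.infDist (x 0) C * q ^ (k+1) := by ring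
  -- tail bound
  have tail : ∀ k m, k ≤ m → ‖x m - x k‖ ≤ 2 * Metric.infDist (x k) C := by
    intro k m hkm
    obtain ⟨z, hz, hzeq⟩ := exists_proj_point C ⟨z0, hz0⟩ hCclosed hCconv (x k)
    calc ‖x m - x k‖ = ‖(x m - z) + (z - x k)‖ := by rw [sub_add_sub_cancel]
      _ ≤ ‖x m - z‖ + ‖z - x k‖ := norm_add_le _ _
      _ ≤ ‖x k - z‖ + ‖x k - z‖ := by
          gcongr
          · exact fejmono z hz k m hkm
          · rw [norm_sub_rev]
      _ = 2 * Metric.infDist (x k) C := by rw [hzeq]; ring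
  have hd0 : 0 ≤ Metric.infDist (x 0) C := Metric.infDist_nonneg
  -- Cauchy
  have hcauchy : CauchySeq x := by
    apply cauchySeq_of_le_geometric q (2 * Metric.infDist (x 0) C) hq1
    intro n
    rw [dist_eq_norm, norm_sub_rev]
    calc ‖x (n+1) - x n‖ ≤ 2 * Metric.infDist (x n) C := tail n (n+1) (Nat.le_succ n)
      _ ≤ 2 * (Metric.infDist (x 0) C * q ^ n) := by
          have := hdecay n; linarith
      _ = 2 * Metric.infDist (x 0) C * q ^ n := by ring
  obtain ⟨xstar, hlim⟩ := cauchySeq_tendsto_of_complete hcauchy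
  -- infDist tends to 0
  have htend0 : Filter.Tendsto (fun n => Metric.infDist (x n) C) Filter.atTop (nhds 0) := by
    apply squeeze_zero (fun n => Metric.infDist_nonneg) hdecay
    have := tendsto_pow_atTop_nhds_zero_of_lt_one hq0.le hq1
    simpa using this.const_mul (Metric.infDist (x 0) C)
  have hxstarC : xstar ∈ C := by
    have hcont : Filter.Tendsto (fun n => Metric.infDist (x n) C) Filter.atTop
        (nhds (Metric.infDist xstar C)) :=
      ((Metric.continuous_infDist_pt C).continuousAt).tendsto.comp hlim
    have h0 : Metric.infDist xstar C = 0 := tendsto_nhds_unique hcont htend0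
    exact (hCclosed.mem_iff_infDist_zero ⟨z0, hz0⟩).mpr h0
  refine ⟨xstar, hxstarC, q, ⟨hq0, hq1⟩, hlim, ?_⟩
  intro k
  have htends : Filter.Tendsto (fun m => ‖x k - x m‖) Filter.atTop (nhds ‖x k - xstar‖) :=
    ((hlim.const_sub (x k)).norm)
  apply le_of_tendsto htends
  filter_upwards [Filter.eventually_ge_atTop k] with m hm
  rw [norm_sub_rev]
  calc ‖x m - x k‖ ≤ 2 * Metric.infDist (x k) C := tail k m hm
    _ ≤ 2 * (Metric.infDist (x 0) C * q ^ k) := by have := hdecay k; linarith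
    _ = 2 * Metric.infDist (x 0) C * q ^ k := by ring
end

section
/- Let C ⊆ H be nonempty, closed and convex, and for each k let U_k : H → H be ρ_k-strongly quasi-nonexpansive with ρ := inf_k ρ_k > 0 and C ⊆ ⋂_k Fix U_k. Let x^0 ∈ H and x^{k+1} := U_k x^k. If (U_k) is boundedly C-regular (for every bounded S and every (x^k) ⊆ S, ‖U_k x^k − x^k‖ → 0 implies d(x^k, C) → 0), then x^k converges strongly to some point x* ∈ C. -/
theorem boundedly_regular_strong_convergence
    {H : Type*} [NormedAddCommGroup H] [InnerProductSpace ℝ H] [CompleteSpace H]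
    (C : Set H) (hCne : C.Nonempty) (hCclosed : IsClosed C) (hCconv : Convex ℝ C)
    (U : ℕ → H → H) (ρk : ℕ → ℝ) (ρ : ℝ) (hρpos : 0 < ρ) (hρle : ∀ k, ρ ≤ ρk k)
    (hsqne : ∀ k, ∀ x : H, ∀ z ∈ {y : H | U k y = y},
      ‖U k x - z‖ ^ 2 ≤ ‖x - z‖ ^ 2 - ρk k * ‖U k x - x‖ ^ 2)
    (hCfix : ∀ k, C ⊆ {y : H | U k y = y})
    (x : ℕ → H) (hx : ∀ k, x (k + 1) = U k (x k))
    (hreg : ∀ S : Set H, Bornology.IsBounded S →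
      ∀ y : ℕ → H, (∀ k, y k ∈ S) →
        Filter.Tendsto (fun k => ‖U k (y k) - y k‖) Filter.atTop (nhds 0) →
        Filter.Tendsto (fun k => Metric.infDist (y k) C) Filter.atTop (nhds 0)) :
    ∃ xstar ∈ C, Filter.Tendsto x Filter.atTop (nhds xstar) := by
  obtain ⟨z, hz⟩ := hCne
  -- key inequality
  have key : ∀ w ∈ C, ∀ k,
      ‖x (k+1) - w‖^2 ≤ ‖x k - w‖^2 - ρ * ‖U k (x k) - x k‖^2 := by
    intro w hw k
    have h := hsqne k (x k) w (hCfix k hw)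
    rw [hx k]
    have h2 : ρ * ‖U k (x k) - x k‖^2 ≤ ρk k * ‖U k (x k) - x k‖^2 :=
      mul_le_mul_of_nonneg_right (hρle k) (by positivity)
    linarith
  have anti : ∀ w ∈ C, ∀ m n : ℕ, m ≤ n → ‖x n - w‖ ≤ ‖x m - w‖ := by
    intro w hw m n hmn
    induction n, hmn using Nat.le_induction with
    | base => exact le_refl _
    | succ n hmn ih =>
      have h1 : ‖x (n+1) - w‖^2 ≤ ‖x n - w‖^2 := by
        have hk := key w hw n
        nlinarith [mul_nonneg hρpos.le (sq_nonneg ‖U n (x n) - x n‖)]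
      have h2 : ‖x (n+1) - w‖ ≤ ‖x n - w‖ := by
        nlinarith [norm_nonneg (x (n+1) - w), norm_nonneg (x n - w)]
      exact h2.trans ih
  -- partial sums of residuals bounded
  have sum_le : ∀ n, ∑ k ∈ Finset.range n, ρ * ‖U k (x k) - x k‖^2
      ≤ ‖x 0 - z‖^2 - ‖x n - z‖^2 := by
    intro n
    induction n with
    | zero => simp
    | succ n ih =>
      rw [Finset.sum_range_succ]
      have := key z hz n
      linarith
  have hsummable : Summable (fun k => ρ * ‖U k (x k) - x k‖^2) := by
    apply summable_of_sum_range_le (c := ‖x 0 - z‖^2)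
      (fun k => by positivity)
    intro n
    have := sum_le n
    nlinarith [sq_nonneg ‖x n - z‖]
  have hsq0 : Filter.Tendsto (fun k => ‖U k (x k) - x k‖^2) Filter.atTop (nhds 0) := by
    have h1 := hsummable.tendsto_atTop_zero
    have h2 := h1.const_mul ρ⁻¹
    simp only [mul_zero] at h2
    refine h2.congr (fun k => ?_)
    field_simp
  have hres : Filter.Tendsto (fun k => ‖U k (x k) - x k‖) Filter.atTop (nhds 0) := by
    have h := (Real.continuous_sqrt.tendsto 0).comp hsq0
    simp only [Real.sqrt_zero] at h
    refine h.congr (fun k => ?_)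
    simp [Real.sqrt_sq (norm_nonneg _)]
  -- boundedness
  have hb : ∀ k, x k ∈ Metric.closedBall z ‖x 0 - z‖ := by
    intro k
    simpa [Metric.mem_closedBall, dist_eq_norm] using anti z hz 0 k (Nat.zero_le k)
  have hd : Filter.Tendsto (fun k => Metric.infDist (x k) C) Filter.atTop (nhds 0) :=
    hreg _ Metric.isBounded_closedBall x hb hres
  -- Cauchy
  have hcauchy : CauchySeq x := by
    rw [Metric.cauchySeq_iff']
    intro ε hε
    have : ∀ᶠ k in Filter.atTop, Metric.infDist (x k) C < ε / 4 := by
      have := hd.eventually (gt_mem_nhds (by linarith : (0:ℝ) < ε / 4))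
      exact this
    obtain ⟨N, hN⟩ := this.exists
    obtain ⟨c, hcC, hcd⟩ := (Metric.infDist_lt_iff ⟨z, hz⟩).mp hN
    refine ⟨N, fun n hn => ?_⟩
    have h1 : ‖x n - c‖ ≤ ‖x N - c‖ := anti c hcC N n hn
    have : dist (x n) (x N) ≤ dist (x n) c + dist c (x N) := dist_triangle _ _ _
    rw [dist_eq_norm] at hcd ⊢
    rw [dist_eq_norm, dist_eq_norm, dist_eq_norm] at this
    have h3 : ‖c - x N‖ = ‖x N - c‖ := norm_sub_rev _ _
    linarith
  obtain ⟨xstar, hlim⟩ := cauchySeq_tendsto_of_complete hcauchy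
  have hinf : Metric.infDist xstar C = 0 := by
    have h1 : Filter.Tendsto (fun k => Metric.infDist (x k) C) Filter.atTop
        (nhds (Metric.infDist xstar C)) :=
      ((Metric.continuous_infDist_pt C).tendsto xstar).comp hlim
    exact tendsto_nhds_unique h1 hd
  exact ⟨xstar, (hCclosed.mem_iff_infDist_zero ⟨z, hz⟩).mpr hinf, hlim⟩
end
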